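/- Let A be an m×n real matrix with Frobenius norm strictly less than 1, and let x ~ N(0, I_m) and y ~ N(0, I_n) be independent standard Gaussian vectors. Then E[exp(xᵀAy)] ≤ 1/√(1 − ‖A‖_F²). -/

import Mathlib

open MeasureTheory ProbabilityTheory

/-- The standard Gaussian measure `N(0, I_m)` on `Fin m → ℝ`. -/
noncomputable def stdGaussian (m : ℕ) : Measure (Fin m → ℝ) :=
  Measure.pi fun _ => gaussianReal 0 1

/-- The Frobenius norm of a matrix. -/
noncomputable def frobNorm {m n : ℕ} (A : Matrix (Fin m) (Fin n) ℝ) : ℝ :=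
  Real.sqrt (∑ i, ∑ j, (A i j) ^ 2)

/-!
Integrating out `x` first, `xᵀAy ~ N(0, ‖Ay‖²)` gives `E_x exp (xᵀAy) = exp (‖Ay‖² / 2)`.
Each coordinate `(Ay)_i` is `N(0, v_i)` with `v_i = ∑_j A_ij²`, and `∑_i v_i = ‖A‖_F² =: S`.
Jensen's inequality for `exp` with weights `v_i / S` bounds `exp (‖Ay‖² / 2)` by
`∑_i (v_i / S) exp (S (Ay)_i² / (2 v_i))`, and each of these terms has expectation `1 / √(1 - S)`
since `E exp (c Z²) = 1 / √(1 - 2cv)` for `Z ~ N(0, v)`. The correlations between the coordinates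
of `Ay` never enter.
-/

open Real WithLp Matrix
open scoped ENNReal NNReal

lemma lintegral_exp_gaussianReal (μ : ℝ) (v : ℝ≥0) :
    ∫⁻ x, ENNReal.ofReal (exp x) ∂gaussianReal μ v = ENNReal.ofReal (exp (μ + v / 2)) := by
  rw [← ofReal_integral_eq_lintegral_ofReal (by simpa using integrable_exp_mul_gaussianReal 1)
    (ae_of_all _ fun x => (exp_pos x).le)]
  congr 1
  simpa [mgf] using congrFun (mgf_id_gaussianReal (μ := μ) (v := v)) 1

lemma gaussianPDFReal_mul_exp_mul_sq {c : ℝ} (hc : 2 * c < 1) (x : ℝ) :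
    gaussianPDFReal 0 1 x * exp (c * x ^ 2)
      = (√(1 - 2 * c))⁻¹ * gaussianPDFReal 0 (1 - 2 * c)⁻¹.toNNReal x := by
  have hc' : 0 < 1 - 2 * c := by linarith
  simp only [gaussianPDFReal, Real.coe_toNNReal _ (inv_nonneg.2 hc'.le), NNReal.coe_one,
    sub_zero, mul_one]
  rw [mul_assoc, ← exp_add, sqrt_mul (x := 2 * π) (by positivity), sqrt_inv]
  field_simp
  ring_nf

lemma lintegral_exp_mul_sq_gaussianReal_zero_one {c : ℝ} (hc : 2 * c < 1) :
    ∫⁻ x, ENNReal.ofReal (exp (c * x ^ 2)) ∂gaussianReal 0 1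
      = ENNReal.ofReal (√(1 - 2 * c))⁻¹ := by
  rw [gaussianReal_of_var_ne_zero _ one_ne_zero,
    lintegral_withDensity_eq_lintegral_mul _ (measurable_gaussianPDF _ _) (by fun_prop)]
  simp_rw [Pi.mul_apply, gaussianPDF, ← ENNReal.ofReal_mul (gaussianPDFReal_nonneg _ _ _),
    gaussianPDFReal_mul_exp_mul_sq hc, ENNReal.ofReal_mul (inv_nonneg.2 (sqrt_nonneg _))]
  rw [lintegral_const_mul _ (by fun_prop)]
  simp_rw [← gaussianPDF_def]
  rw [lintegral_gaussianPDF_eq_one _ (Real.toNNReal_pos.2 (inv_pos.2 (by linarith))).ne', mul_one]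

lemma lintegral_exp_mul_sq_gaussianReal (v : ℝ≥0) {c : ℝ} (hc : 2 * c * v < 1) :
    ∫⁻ x, ENNReal.ofReal (exp (c * x ^ 2)) ∂gaussianReal 0 v
      = ENNReal.ofReal (√(1 - 2 * c * v))⁻¹ := by
  have hv : gaussianReal 0 v = (gaussianReal 0 1).map (√v * ·) := by
    rw [gaussianReal_map_const_mul]
    congr
    · simp
    · ext; simp
  rw [hv, lintegral_map (by fun_prop) (by fun_prop)]
  simp_rw [mul_pow, sq_sqrt v.coe_nonneg, ← mul_assoc]
  rw [lintegral_exp_mul_sq_gaussianReal_zero_one (by linarith), mul_assoc]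

lemma map_dotProduct_pi_gaussianReal {ι : Type*} [Fintype ι] (a : ι → ℝ) :
    (Measure.pi fun _ : ι => gaussianReal 0 1).map (fun y => a ⬝ᵥ y)
      = gaussianReal 0 (∑ i, a i ^ 2).toNNReal := by
  set L : StrongDual ℝ (EuclideanSpace ℝ ι) := innerSL ℝ (toLp 2 a)
  have hL : (fun y : ι → ℝ => a ⬝ᵥ y) = L ∘ toLp 2 := by
    ext y
    simp [L, EuclideanSpace.inner_toLp_toLp, dotProduct_comm]
  rw [hL, ← Measure.map_map L.continuous.measurable (by fun_prop), map_pi_eq_stdGaussian,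
    IsGaussian.map_eq_gaussianReal, integral_strongDual_stdGaussian, variance_dual_stdGaussian]
  simp only [L, innerSL_apply_norm, EuclideanSpace.real_norm_sq_eq]

lemma lintegral_exp_dotProduct_pi_gaussianReal {ι : Type*} [Fintype ι] (b : ι → ℝ) :
    ∫⁻ x, ENNReal.ofReal (exp (b ⬝ᵥ x)) ∂Measure.pi (fun _ : ι => gaussianReal 0 1)
      = ENNReal.ofReal (exp ((∑ i, b i ^ 2) / 2)) := by
  rw [← lintegral_map (f := fun t => ENNReal.ofReal (exp t)) (by fun_prop) (by fun_prop),
    map_dotProduct_pi_gaussianReal, lintegral_exp_gaussianReal,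
    Real.coe_toNNReal _ (Finset.sum_nonneg fun i _ => sq_nonneg _), zero_add]

lemma exp_sum_sq_div_two_le {ι : Type*} [Fintype ι] {v : ι → ℝ≥0} {S : ℝ}
    (hS : ∑ i, (v i : ℝ) = S) (hS0 : 0 < S) {x : ι → ℝ} (hx : ∀ i, v i = 0 → x i = 0) :
    exp (∑ i, x i ^ 2 / 2) ≤ ∑ i, v i / S * exp (S / (2 * v i) * x i ^ 2) := by
  have hsum : ∑ i, x i ^ 2 / 2 = ∑ i, v i / S * (S / (2 * v i) * x i ^ 2) := by
    refine Finset.sum_congr rfl fun i _ => ?_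
    rcases eq_or_ne (v i) 0 with hvi | hvi
    · simp [hx i hvi]
    · have : (v i : ℝ) ≠ 0 := NNReal.coe_ne_zero.2 hvi
      field_simp
  have hw : ∑ i, (v i : ℝ) / S = 1 := by rw [← Finset.sum_div, hS, div_self hS0.ne']
  rw [hsum]
  exact convexOn_exp.map_sum_le (fun i _ => by positivity) hw fun i _ => Set.mem_univ _

theorem lintegral_exp_sum_sq_div_two_le {Ω ι : Type*} [MeasurableSpace Ω] {μ : Measure Ω}
    [IsProbabilityMeasure μ] [Fintype ι] {X : ι → Ω → ℝ} {v : ι → ℝ≥0}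
    (hX : ∀ i, μ.map (X i) = gaussianReal 0 (v i)) (hv : ∑ i, (v i : ℝ) < 1) :
    ∫⁻ ω, ENNReal.ofReal (exp (∑ i, X i ω ^ 2 / 2)) ∂μ
      ≤ ENNReal.ofReal (√(1 - ∑ i, (v i : ℝ)))⁻¹ := by
  set S := ∑ i, (v i : ℝ) with hS
  have hXm : ∀ i, AEMeasurable (X i) μ := fun i =>
    aemeasurable_of_map_neZero (by rw [hX i]; infer_instance)
  have hX0 : ∀ᵐ ω ∂μ, ∀ i, v i = 0 → X i ω = 0 := ae_all_iff.2 fun i =>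
    Filter.eventually_imp_distrib_left.2 fun hi =>
      ae_of_ae_map (p := (· = 0)) (hXm i) (by simp [hX i, hi, gaussianReal_zero_var])
  rcases (Finset.sum_nonneg fun i _ => (v i).coe_nonneg : 0 ≤ S).eq_or_lt with hS0 | hS0
  · have hv0 : ∀ i, v i = 0 := by simpa [S, Finset.sum_eq_zero_iff_of_nonneg] using hS0.symm
    rw [lintegral_congr_ae (g := 1) (by filter_upwards [hX0] with ω hω; simp [hω _ (hv0 _)])]
    simp [S, ← hS0]
  calc ∫⁻ ω, ENNReal.ofReal (exp (∑ i, X i ω ^ 2 / 2)) ∂μ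
      ≤ ∫⁻ ω, ∑ i, ENNReal.ofReal (v i / S) * ENNReal.ofReal (exp (S / (2 * v i) * X i ω ^ 2))
          ∂μ := by
        refine lintegral_mono_ae ?_
        filter_upwards [hX0] with ω hω
        refine (ENNReal.ofReal_le_ofReal (exp_sum_sq_div_two_le hS.symm hS0 hω)).trans_eq ?_
        rw [ENNReal.ofReal_sum_of_nonneg fun i _ => by positivity]
        simp_rw [ENNReal.ofReal_mul (by positivity : (0:ℝ) ≤ v _ / S)]
    _ = ∑ i, ENNReal.ofReal (v i / S)
          * ∫⁻ ω, ENNReal.ofReal (exp (S / (2 * v i) * X i ω ^ 2)) ∂μ := by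
        rw [lintegral_finsetSum' _ fun i _ => by fun_prop]
        exact Finset.sum_congr rfl fun i _ => lintegral_const_mul'' _ (by fun_prop)
    _ = ∑ i, ENNReal.ofReal (v i / S) * ENNReal.ofReal (√(1 - S))⁻¹ := by
        refine Finset.sum_congr rfl fun i _ => ?_
        rcases eq_or_ne (v i) 0 with hvi | hvi
        · simp [hvi]
        have hci : 2 * (S / (2 * v i)) * v i = S := by
          have : (v i : ℝ) ≠ 0 := NNReal.coe_ne_zero.2 hvi
          field_simp
        rw [← lintegral_map' (f := fun x => ENNReal.ofReal (exp (S / (2 * v i) * x ^ 2)))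
          (by fun_prop) (hXm i), hX i, lintegral_exp_mul_sq_gaussianReal _ (by rwa [hci]), hci]
    _ = ENNReal.ofReal (√(1 - S))⁻¹ := by
        rw [← Finset.sum_mul, ← ENNReal.ofReal_sum_of_nonneg fun i _ => by positivity,
          ← Finset.sum_div, div_self hS0.ne', ENNReal.ofReal_one, one_mul]

lemma frobNorm_sq {m n : ℕ} (A : Matrix (Fin m) (Fin n) ℝ) :
    frobNorm A ^ 2 = ∑ i, ∑ j, A i j ^ 2 :=
  sq_sqrt (Finset.sum_nonneg fun _ _ => Finset.sum_nonneg fun _ _ => sq_nonneg _)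

/-- If `‖A‖_F < 1` and `x ~ N(0,I_m)`, `y ~ N(0,I_n)` are independent, then
`E[exp (xᵀ A y)] ≤ 1 / √(1 - ‖A‖_F²)`. -/
theorem expectation_exp_bilinear_gaussian_le {m n : ℕ} (A : Matrix (Fin m) (Fin n) ℝ)
    (hA : frobNorm A < 1) :
    ∫ p : (Fin m → ℝ) × (Fin n → ℝ), Real.exp (∑ i, ∑ j, p.1 i * A i j * p.2 j)
        ∂((stdGaussian m).prod (stdGaussian n))
      ≤ 1 / Real.sqrt (1 - frobNorm A ^ 2) := by
  unfold _root_.stdGaussian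
  have hA2 : ∑ i, ∑ j, A i j ^ 2 < 1 := by
    rw [← frobNorm_sq]
    exact pow_lt_one₀ (sqrt_nonneg _) hA two_ne_zero
  have hrow : ∀ i, ((∑ j, A i j ^ 2).toNNReal : ℝ) = ∑ j, A i j ^ 2 := fun i =>
    Real.coe_toNNReal _ (Finset.sum_nonneg fun _ _ => sq_nonneg _)
  have hmgf : ∀ y, ∫⁻ x, ENNReal.ofReal (exp (∑ i, ∑ j, x i * A i j * y j))
      ∂Measure.pi (fun _ => gaussianReal 0 1) = ENNReal.ofReal (exp (∑ i, (A i ⬝ᵥ y) ^ 2 / 2)) :=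
    fun y => by
    have hbilin : ∀ x : Fin m → ℝ, ∑ i, ∑ j, x i * A i j * y j = (A *ᵥ y) ⬝ᵥ x := fun x => by
      simp [dotProduct, mulVec, Finset.mul_sum, mul_comm, mul_left_comm]
    simp_rw [hbilin]
    rw [lintegral_exp_dotProduct_pi_gaussianReal, Finset.sum_div]
    rfl
  rw [integral_eq_lintegral_of_nonneg_ae (ae_of_all _ fun _ => (exp_pos _).le) (by fun_prop)]
  refine ENNReal.toReal_le_of_le_ofReal (by positivity) ?_
  rw [lintegral_prod_symm _ (by fun_prop)]
  simp_rw [hmgf]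
  simpa only [hrow, ← frobNorm_sq, one_div] using lintegral_exp_sum_sq_div_two_le
    (fun i => map_dotProduct_pi_gaussianReal (A i)) (by simpa only [hrow] using hA2)
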